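/- Let f^{[α]}, g^{[β]} ∈ I^{[Σ]} with f, g ≠ 0, let a = (m1⊗n1, m2⊗n2) ∈ amb(f^{[α]}, g^{[β]}), and let c, d ∈ R be any Bézout coefficients with c·LC(f) + d·LC(g) = gcd(LC(f), LC(g)). Then the G-polynomial G-Pol_{c,d}(a) has leading monomial LM(a) and leading coefficient gcd(LC(f), LC(g)); in particular, its leading term does not depend on the choice of Bézout coefficients c, d. -/

import Mathlib

/-!  Signature Gröbner bases in the mixed algebra `R[x₁,…,x_k]⟨y₁,…,y_n⟩`
over a principal ideal domain `R`, following Hofstadler–Verron. -/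

open Finsupp

/-- A mixed monomial `v·w`, with `v` a commutative monomial in `x₁,…,x_k`
(recorded by its exponent vector) and `w` a word in the noncommutative
variables `y₁,…,y_n`. -/
@[ext]
structure MMon (k n : ℕ) where
  c : Fin k →₀ ℕ
  w : FreeMonoid (Fin n)

namespace MMon

instance (k n : ℕ) : One (MMon k n) := ⟨⟨0, 1⟩⟩
noncomputable instance (k n : ℕ) : Mul (MMon k n) := ⟨fun a b => ⟨a.c + b.c, a.w * b.w⟩⟩

@[simp] lemma mul_c {k n : ℕ} (a b : MMon k n) : (a * b).c = a.c + b.c := rfl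
@[simp] lemma mul_w {k n : ℕ} (a b : MMon k n) : (a * b).w = a.w * b.w := rfl
@[simp] lemma one_c {k n : ℕ} : (1 : MMon k n).c = 0 := rfl
@[simp] lemma one_w {k n : ℕ} : (1 : MMon k n).w = 1 := rfl

noncomputable instance (k n : ℕ) : Monoid (MMon k n) where
  mul_assoc a b c := by ext : 1 <;> simp [add_assoc, mul_assoc]
  one_mul a := by ext : 1 <;> simp
  mul_one a := by ext : 1 <;> simp

end MMon

/-- A module monomial `u·a·ε_i·b` of the free bimodule `Σ = (A ⊗_{R[X]} A)^r`. -/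
@[ext]
structure ModMon (k n r : ℕ) where
  u : Fin k →₀ ℕ
  a : FreeMonoid (Fin n)
  i : Fin r
  b : FreeMonoid (Fin n)

instance {k n r : ℕ} [NeZero r] : Inhabited (ModMon k n r) := ⟨⟨0, 1, default, 1⟩⟩

/-- The mixed algebra `A = R[x₁,…,x_k]⟨y₁,…,y_n⟩`, realised as the monoid
algebra of the monoid of mixed monomials. -/
abbrev MixedAlg (R : Type) [CommRing R] (k n : ℕ) : Type := MonoidAlgebra R (MMon k n)

/-- The free `A`-bimodule `Σ = (A ⊗_{R[X]} A)^r`, realised as the free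
`R`-module on the module monomials `u·a·ε_i·b`. -/
abbrev SigModule (R : Type) [CommRing R] (k n r : ℕ) : Type := ModMon k n r →₀ R

section Defs

variable {R : Type} [CommRing R] {k n r : ℕ}

/-- The term `c·m` of `A` (an element of `T(A)` when `c ≠ 0`). -/
noncomputable def trm (m : MMon k n) (c : R) : MixedAlg R k n := MonoidAlgebra.single m c

/-- The word `b ∈ ⟨Y⟩`, viewed as an element of `A`. -/
noncomputable def wrd (b : FreeMonoid (Fin n)) : MixedAlg R k n :=
  MonoidAlgebra.single ⟨0, b⟩ 1

/-- Multiplication `m·σ` of a module monomial by a mixed monomial on the left. -/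
noncomputable def mulL (m : MMon k n) (σ : ModMon k n r) : ModMon k n r :=
  ⟨m.c + σ.u, m.w * σ.a, σ.i, σ.b⟩

/-- Multiplication `σ·m` of a module monomial by a mixed monomial on the right. -/
noncomputable def mulR (σ : ModMon k n r) (m : MMon k n) : ModMon k n r :=
  ⟨σ.u + m.c, σ.a, σ.i, σ.b * m.w⟩

/-- The two-sided multiple `m·σ·b` of a module monomial by a mixed monomial `m`
on the left and a word `b` on the right. -/
noncomputable def mulLR (m : MMon k n) (σ : ModMon k n r) (b : FreeMonoid (Fin n)) : ModMon k n r :=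
  ⟨m.c + σ.u, m.w * σ.a, σ.i, σ.b * b⟩

/-- The left action of `A` on the bimodule `Σ`. -/
noncomputable def actL (f : MixedAlg R k n) (α : SigModule R k n r) : SigModule R k n r :=
  Finsupp.sum f.coeff fun m cm => Finsupp.sum α fun σ cσ => Finsupp.single (mulL m σ) (cm * cσ)

/-- The right action of `A` on the bimodule `Σ`. -/
noncomputable def actR (α : SigModule R k n r) (f : MixedAlg R k n) : SigModule R k n r :=
  Finsupp.sum f.coeff fun m cm => Finsupp.sum α fun σ cσ => Finsupp.single (mulR σ m) (cσ * cm)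

/-- The two-sided multiple `t·α·b` of `α ∈ Σ` by the term `t = c·m` on the left
and the word `b` on the right. -/
noncomputable def scaleLR (m : MMon k n) (c : R) (α : SigModule R k n r)
    (b : FreeMonoid (Fin n)) : SigModule R k n r :=
  Finsupp.sum α fun σ cσ => Finsupp.single (mulLR m σ b) (c * cσ)

/-- The `A`-bimodule homomorphism `Σ → A`, `α ↦ ᾱ`, sending `ε_i` to `f_i`
(where `F i = f_i` are the generators). -/
noncomputable def barMap (F : Fin r → MixedAlg R k n) (α : SigModule R k n r) :
    MixedAlg R k n :=
  Finsupp.sum α fun σ cσ =>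
    trm ⟨σ.u, σ.a⟩ cσ * F σ.i * wrd σ.b

/-- The basis vector `ε_i` of `Σ`. -/
noncomputable def epsMod (i : Fin r) : SigModule R k n r :=
  Finsupp.single ⟨0, 1, i, 1⟩ 1

/-- The labeled module `I^{[Σ]}`: pairs `f^{[α]}` with `ᾱ = f`. -/
def Labeled (F : Fin r → MixedAlg R k n) (p : MixedAlg R k n × SigModule R k n r) : Prop :=
  barMap F p.2 = p.1

/-- A syzygy of `I^{[Σ]}`: an element `α ∈ Σ` with `ᾱ = 0`. -/
def IsSyzygy (F : Fin r → MixedAlg R k n) (γ : SigModule R k n r) : Prop :=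
  barMap F γ = 0

section Orders

variable [LinearOrder (MMon k n)] [LinearOrder (ModMon k n r)]

/-- The leading monomial of `f ∈ A` (with `LM 0 = ⊥`). -/
noncomputable def LMb (f : MixedAlg R k n) : WithBot (MMon k n) := f.coeff.support.max

/-- The leading monomial of `f ∈ A` (defaulting to `1` for `f = 0`). -/
noncomputable def LMd (f : MixedAlg R k n) : MMon k n := WithBot.unbotD 1 (f.coeff.support.max)

/-- The leading coefficient of `f ∈ A` (`0` for `f = 0`). -/
noncomputable def LC (f : MixedAlg R k n) : R := f.coeff (LMd f)

/-- The leading term of `f ∈ A`, as an element of `A` (`0` for `f = 0`). -/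
noncomputable def LTerm (f : MixedAlg R k n) : MixedAlg R k n := trm (LMd f) (LC f)

/-- The signature monomial of `α ∈ Σ` (with `⊥` for `α = 0`): the `⪯`-largest
monomial of the support of `α`. -/
noncomputable def sigb (α : SigModule R k n r) : WithBot (ModMon k n r) := α.support.max

variable [NeZero r]

/-- The signature monomial of `α ∈ Σ`, defaulting for `α = 0`. -/
noncomputable def sigMd (α : SigModule R k n r) : ModMon k n r :=
  WithBot.unbotD default (α.support.max)

/-- The coefficient of the signature of `α`. -/
noncomputable def sigC (α : SigModule R k n r) : R := α (sigMd α)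

/-- The signature `sig(α)` of `α ∈ Σ`, as a term, i.e. a single-term element of
`Σ` (`0` for `α = 0`).  Equality `sig α = sig β` of signatures as *terms* is
`sigT α = sigT β`; the relation `sig α ≃ sig β` is `sigb α = sigb β`; the
relation `sig α ≺ sig β` is `sigb α < sigb β`. -/
noncomputable def sigT (α : SigModule R k n r) : SigModule R k n r :=
  Finsupp.single (sigMd α) (sigC α)

end Orders

/-- The compatibility requirements on the chosen monomial ordering on `M(A)`
and module ordering on `M(Σ)`: both are compatible with multiplication,
both are well-orderings, and they are compatible with each other. -/
structure IsOrderSetting (k n r : ℕ) [LinearOrder (MMon k n)]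
    [LinearOrder (ModMon k n r)] : Prop where
  mon_wf : WellFounded ((· < ·) : MMon k n → MMon k n → Prop)
  mod_wf : WellFounded ((· < ·) : ModMon k n r → ModMon k n r → Prop)
  mon_mul : ∀ a b m m' : MMon k n, m ≤ m' → a * m * b ≤ a * m' * b
  mod_mul : ∀ (m : MMon k n) (b : FreeMonoid (Fin n)) (σ τ : ModMon k n r),
      σ ≤ τ → mulLR m σ b ≤ mulLR m τ b
  compat₁ : ∀ (u v : Fin k →₀ ℕ) (a b : FreeMonoid (Fin n)) (i : Fin r),
      (⟨u, a⟩ : MMon k n) < ⟨v, b⟩ ↔ (⟨u, a, i, 1⟩ : ModMon k n r) < ⟨v, b, i, 1⟩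
  compat₂ : ∀ (u v : Fin k →₀ ℕ) (a b : FreeMonoid (Fin n)) (i : Fin r),
      (⟨u, a⟩ : MMon k n) < ⟨v, b⟩ ↔ (⟨u, 1, i, a⟩ : ModMon k n r) < ⟨v, 1, i, b⟩

end Defs

/-! ### Ambiguities -/

/-- `WordAmb a b c d p q` says that `(a ⊗ b, c ⊗ d, p, q)` is an ambiguity
(overlap, inclusion or external) of the words `p` and `q`. -/
inductive WordAmb {n : ℕ} :
    FreeMonoid (Fin n) → FreeMonoid (Fin n) → FreeMonoid (Fin n) → FreeMonoid (Fin n) →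
    FreeMonoid (Fin n) → FreeMonoid (Fin n) → Prop
  | overlap₁ (a b p q : FreeMonoid (Fin n)) (h : a * p = q * b)
      (ha : a ≠ 1) (hb : b ≠ 1) (hla : a.length < q.length) (hlb : b.length < p.length) :
      WordAmb a 1 1 b p q
  | overlap₂ (a b p q : FreeMonoid (Fin n)) (h : p * a = b * q)
      (ha : a ≠ 1) (hb : b ≠ 1) (hla : a.length < q.length) (hlb : b.length < p.length) :
      WordAmb 1 a b 1 p q
  | inclusion₁ (a b p q : FreeMonoid (Fin n)) (h : p = a * q * b) :
      WordAmb 1 1 a b p q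
  | inclusion₂ (a b p q : FreeMonoid (Fin n)) (h : a * p * b = q) :
      WordAmb a b 1 1 p q
  | external₁ (m p q : FreeMonoid (Fin n)) :
      WordAmb 1 (m * q) (p * m) 1 p q
  | external₂ (m p q : FreeMonoid (Fin n)) :
      WordAmb (q * m) 1 1 (m * p) p q

section Amb

variable {R : Type} [CommRing R] {k n r : ℕ}
variable [LinearOrder (MMon k n)] [LinearOrder (ModMon k n r)]

/-- `IsAmb f g m₁ n₁ m₂ n₂` says that `(m₁ ⊗ n₁, m₂ ⊗ n₂)` is an ambiguity of the
(nonzero) polynomials `f` and `g`: an ambiguity of the word parts of their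
leading monomials, with left cofactors completed by `lcm(u,v)/u` resp.
`lcm(u,v)/v` on the commutative parts. -/
def IsAmb (f g : MixedAlg R k n) (m₁ : MMon k n) (n₁ : FreeMonoid (Fin n))
    (m₂ : MMon k n) (n₂ : FreeMonoid (Fin n)) : Prop :=
  ∃ a b c d : FreeMonoid (Fin n),
    WordAmb a b c d (LMd f).w (LMd g).w ∧
    m₁ = ⟨((LMd f).c ⊔ (LMd g).c) - (LMd f).c, a⟩ ∧ n₁ = b ∧
    m₂ = ⟨((LMd f).c ⊔ (LMd g).c) - (LMd g).c, c⟩ ∧ n₂ = d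

/-- The leading monomial `LM(a) = LM(m₁ f n₁) = LM(m₂ g n₂)` of an ambiguity. -/
noncomputable def ambLM (f : MixedAlg R k n) (m₁ : MMon k n) (n₁ : FreeMonoid (Fin n)) :
    MMon k n :=
  m₁ * LMd f * ⟨0, n₁⟩

variable [IsDomain R] [GCDMonoid R]

/-- The cofactor `lcmlc(f,g)/LC(f)`. -/
noncomputable def cofL (f g : MixedAlg R k n) : R :=
  Classical.choose (dvd_lcm_left (LC f) (LC g))

/-- The cofactor `lcmlc(f,g)/LC(g)`. -/
noncomputable def cofR (f g : MixedAlg R k n) : R :=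
  Classical.choose (dvd_lcm_right (LC f) (LC g))

variable [NeZero r]

/-- The signature `SIG(a) = max(sig(c_f m₁ α n₁), −sig(c_g m₂ β n₂))` (first in
case of tie) of an ambiguity `a = (m₁ ⊗ n₁, m₂ ⊗ n₂)` of `f^{[α]]`, `g^{[β]}`,
as a term (single-term element) of `Σ`. -/
noncomputable def ambSIG (f g : MixedAlg R k n) (α β : SigModule R k n r)
    (m₁ : MMon k n) (n₁ : FreeMonoid (Fin n)) (m₂ : MMon k n) (n₂ : FreeMonoid (Fin n)) :
    SigModule R k n r :=
  if sigb (scaleLR m₂ (cofR f g) β n₂) ≤ sigb (scaleLR m₁ (cofL f g) α n₁) then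
    sigT (scaleLR m₁ (cofL f g) α n₁)
  else
    - sigT (scaleLR m₂ (cofR f g) β n₂)

/-- An ambiguity is regular if `sig(m₁ α n₁) ≄ sig(m₂ β n₂)`. -/
def RegAmb (α β : SigModule R k n r) (m₁ : MMon k n) (n₁ : FreeMonoid (Fin n))
    (m₂ : MMon k n) (n₂ : FreeMonoid (Fin n)) : Prop :=
  sigb (scaleLR m₁ (1 : R) α n₁) ≠ sigb (scaleLR m₂ (1 : R) β n₂)

/-- An ambiguity is singular if `sig(c_f m₁ α n₁) = sig(c_g m₂ β n₂)`. -/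
def SingAmb (f g : MixedAlg R k n) (α β : SigModule R k n r) (m₁ : MMon k n)
    (n₁ : FreeMonoid (Fin n)) (m₂ : MMon k n) (n₂ : FreeMonoid (Fin n)) : Prop :=
  sigT (scaleLR m₁ (cofL f g) α n₁) = sigT (scaleLR m₂ (cofR f g) β n₂)

/-- The polynomial part of the S-polynomial of an ambiguity. -/
noncomputable def SPolP (f g : MixedAlg R k n) (m₁ : MMon k n) (n₁ : FreeMonoid (Fin n))
    (m₂ : MMon k n) (n₂ : FreeMonoid (Fin n)) : MixedAlg R k n :=
  trm m₁ (cofL f g) * f * wrd n₁ - trm m₂ (cofR f g) * g * wrd n₂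

/-- The module part of the S-polynomial of an ambiguity. -/
noncomputable def SPolM (f g : MixedAlg R k n) (α β : SigModule R k n r) (m₁ : MMon k n)
    (n₁ : FreeMonoid (Fin n)) (m₂ : MMon k n) (n₂ : FreeMonoid (Fin n)) :
    SigModule R k n r :=
  scaleLR m₁ (cofL f g) α n₁ - scaleLR m₂ (cofR f g) β n₂

/-- The polynomial part of the G-polynomial of an ambiguity, w.r.t. Bézout
coefficients `c`, `d`. -/
noncomputable def GPolP (c d : R) (f g : MixedAlg R k n) (m₁ : MMon k n)
    (n₁ : FreeMonoid (Fin n)) (m₂ : MMon k n) (n₂ : FreeMonoid (Fin n)) : MixedAlg R k n :=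
  trm m₁ c * f * wrd n₁ + trm m₂ d * g * wrd n₂

/-- The module part of the G-polynomial of an ambiguity, w.r.t. Bézout
coefficients `c`, `d`. -/
noncomputable def GPolM (c d : R) (α β : SigModule R k n r) (m₁ : MMon k n)
    (n₁ : FreeMonoid (Fin n)) (m₂ : MMon k n) (n₂ : FreeMonoid (Fin n)) :
    SigModule R k n r :=
  scaleLR m₁ c α n₁ + scaleLR m₂ d β n₂

/-- `BezoutFor c d f g`: `c, d` are Bézout coefficients for `LC f`, `LC g`. -/
def BezoutFor (c d : R) (f g : MixedAlg R k n) : Prop :=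
  c * LC f + d * LC g = gcd (LC f) (LC g)

end Amb

/-! ### Reductions, bases, cover -/

section Red

variable {R : Type} [CommRing R] {k n r : ℕ}
variable [LinearOrder (MMon k n)] [LinearOrder (ModMon k n r)]

/-- `f^{[α]}` is (top) sig-reducible by `G`: there are `g^{[β]} ∈ G`, a term
`t = c·m` and a word `b` with `LT(t g b) = LT(f) > LT(f - t g b)` and
`sig(t β b) ⪯ sig(α)`. -/
def SigReducible (G : Set (MixedAlg R k n × SigModule R k n r))
    (f : MixedAlg R k n) (α : SigModule R k n r) : Prop :=
  ∃ g β, (g, β) ∈ G ∧ ∃ (m : MMon k n) (c : R) (b : FreeMonoid (Fin n)), c ≠ 0 ∧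
    LTerm (trm m c * g * wrd b) = LTerm f ∧
    LMb (f - trm m c * g * wrd b) < LMb f ∧
    sigb (scaleLR m c β b) ≤ sigb α

/-- `f^{[α]}` is regular sig-reducible by `G`. -/
def RegSigReducible (G : Set (MixedAlg R k n × SigModule R k n r))
    (f : MixedAlg R k n) (α : SigModule R k n r) : Prop :=
  ∃ g β, (g, β) ∈ G ∧ ∃ (m : MMon k n) (c : R) (b : FreeMonoid (Fin n)), c ≠ 0 ∧
    LTerm (trm m c * g * wrd b) = LTerm f ∧
    LMb (f - trm m c * g * wrd b) < LMb f ∧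
    sigb (scaleLR m c β b) < sigb α

/-- `f^{[α]}` is super reducible by `G`: there are `g^{[β]} ∈ G`, a term `t` and
a word `b` with `sig(α) = sig(t β b)` (as terms) and `LM(f) = LM(t g b)`. -/
def SuperReducible [NeZero r] (G : Set (MixedAlg R k n × SigModule R k n r))
    (f : MixedAlg R k n) (α : SigModule R k n r) : Prop :=
  ∃ g β, (g, β) ∈ G ∧ ∃ (m : MMon k n) (c : R) (b : FreeMonoid (Fin n)), c ≠ 0 ∧
    sigT α = sigT (scaleLR m c β b) ∧
    LMb f = LMb (trm m c * g * wrd b)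

/-- `α ∈ Σ` is (top) reducible by the set `H ⊆ Σ`: `sig(α) = sig(t γ b)` for
some `γ ∈ H`, term `t` and word `b`. -/
def ModReducible [NeZero r] (H : Set (SigModule R k n r)) (α : SigModule R k n r) : Prop :=
  ∃ γ ∈ H, ∃ (m : MMon k n) (c : R) (b : FreeMonoid (Fin n)), c ≠ 0 ∧
    sigT α = sigT (scaleLR m c γ b)

/-- `G` is a (strong) signature Gröbner basis of `I^{[Σ]}`. -/
def IsSigGB (F : Fin r → MixedAlg R k n) (G : Set (MixedAlg R k n × SigModule R k n r)) :
    Prop :=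
  ∀ f α, barMap F α = f → f ≠ 0 → SigReducible G f α

/-- `G` is a signature Gröbner basis of `I^{[Σ]}` up to (module monomial)
signature `σ`. -/
def IsSigGBUpTo (F : Fin r → MixedAlg R k n)
    (G : Set (MixedAlg R k n × SigModule R k n r)) (σ : WithBot (ModMon k n r)) : Prop :=
  ∀ f α, barMap F α = f → f ≠ 0 → sigb α < σ → SigReducible G f α

/-- `H` is a syzygy basis of `I^{[Σ]}`. -/
def IsSyzBasis [NeZero r] (F : Fin r → MixedAlg R k n) (H : Set (SigModule R k n r)) :
    Prop :=
  ∀ γ, IsSyzygy F γ → γ ≠ 0 → ModReducible H γ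

variable [IsDomain R] [GCDMonoid R] [NeZero r]

/-- `G` is complete: the G-polynomials (w.r.t. non-singular Bézout coefficients)
of all ambiguities of `G` are sig-reducible by `G`. -/
def CompleteSet (G : Set (MixedAlg R k n × SigModule R k n r)) : Prop :=
  ∀ g₁ β₁ g₂ β₂, (g₁, β₁) ∈ G → (g₂, β₂) ∈ G →
    ∀ m₁ n₁ m₂ n₂, IsAmb g₁ g₂ m₁ n₁ m₂ n₂ →
      ∀ c d, BezoutFor c d g₁ g₂ →
        sigb (GPolM c d β₁ β₂ m₁ n₁ m₂ n₂) = sigb (ambSIG g₁ g₂ β₁ β₂ m₁ n₁ m₂ n₂) →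
        SigReducible G (GPolP c d g₁ g₂ m₁ n₁ m₂ n₂) (GPolM c d β₁ β₂ m₁ n₁ m₂ n₂)

/-- `MonLcm σ₁ σ₂ τ`: the least common multiple `lcm(σ₁,σ₂)` of the module
monomials `σ₁ = u₁a₁ε_jb₁`, `σ₂ = u₂a₂ε_jb₂` is defined and equals `τ`. -/
def MonLcm (σ₁ σ₂ τ : ModMon k n r) : Prop :=
  σ₁.i = σ₂.i ∧ τ.i = σ₁.i ∧ τ.u = σ₁.u ⊔ σ₂.u ∧
  ((τ.a = σ₁.a ∧ ∃ s, σ₁.a = s * σ₂.a) ∨ (τ.a = σ₂.a ∧ ∃ s, σ₂.a = s * σ₁.a)) ∧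
  ((τ.b = σ₁.b ∧ ∃ s, σ₁.b = σ₂.b * s) ∨ (τ.b = σ₂.b ∧ ∃ s, σ₂.b = σ₁.b * s))

/-- `H` is sig-complete: all sig-Combinations of elements of `H` are reducible
by `H`. -/
def SigCompleteSet (H : Set (SigModule R k n r)) : Prop :=
  ∀ γ₁ ∈ H, ∀ γ₂ ∈ H, ∀ τ, MonLcm (sigMd γ₁) (sigMd γ₂) τ →
    ∀ (m₁ : MMon k n) (b₁ : FreeMonoid (Fin n)) (m₂ : MMon k n) (b₂ : FreeMonoid (Fin n)),
      mulLR m₁ (sigMd γ₁) b₁ = τ → mulLR m₂ (sigMd γ₂) b₂ = τ →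
      ∀ c d : R, c * sigC γ₁ + d * sigC γ₂ = gcd (sigC γ₁) (sigC γ₂) →
        ModReducible H (scaleLR m₁ c γ₁ b₁ + scaleLR m₂ d γ₂ b₂)

/-- The ambiguity `a` (of `g₁^{[β₁]}`, `g₂^{[β₂]}`), with signature `SIG(a)` and
leading monomial `LM(a)`, is covered by `(G, H)`: there are `g^{[β]} ∈ G`,
`γ ∈ H`, terms `t, t'` (possibly `0`) and words `b, b'` with
`SIG(a) = sig(t β b) + sig(t' γ b')` and `LM(t g b) < LM(a)`. -/
def CoveredBy (G : Set (MixedAlg R k n × SigModule R k n r))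
    (H : Set (SigModule R k n r)) (Sig : SigModule R k n r) (Lm : MMon k n) : Prop :=
  ∃ g β, (g, β) ∈ G ∧ ∃ γ ∈ H,
    ∃ (m : MMon k n) (c : R) (b : FreeMonoid (Fin n))
      (m' : MMon k n) (c' : R) (b' : FreeMonoid (Fin n)),
      Sig = sigT (scaleLR m c β b) + sigT (scaleLR m' c' γ b') ∧
      LMb (trm m c * g * wrd b) < (Lm : WithBot (MMon k n))

end Red

/-!
The ambiguity makes `m₁·LM(f)·n₁ = m₂·LM(g)·n₂ = LM(a)`, so at `LM(a)` the G-polynomial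
`c·m₁ f n₁ + d·m₂ g n₂` has coefficient `c·LC(f) + d·LC(g) = gcd(LC f, LC g)`, nonzero as
`LC f ≠ 0`. Every monomial of `m₁ f n₁` has the form `m₁ σ n₁` with `σ ≤ LM(f)`, hence is at most
`LM(a)` by compatibility of the ordering with multiplication, and likewise for `m₂ g n₂`.
-/

instance (k n : ℕ) : IsCancelMul (MMon k n) where
  mul_left_cancel a b c h := by
    obtain ⟨hc, hw⟩ := MMon.ext_iff.1 h
    exact MMon.ext (add_left_cancel hc) (mul_left_cancel hw)
  mul_right_cancel a b c h := by
    obtain ⟨hc, hw⟩ := MMon.ext_iff.1 h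
    exact MMon.ext (add_right_cancel hc) (mul_right_cancel hw)

theorem WordAmb.mul_eq {n : ℕ} {a b c d p q : FreeMonoid (Fin n)} (h : WordAmb a b c d p q) :
    a * p * b = c * q * d := by
  cases h with
  | overlap₁ _ _ _ _ h => simpa using h
  | overlap₂ _ _ _ _ h => simpa using h
  | inclusion₁ _ _ _ _ h => simpa using h
  | inclusion₂ _ _ _ _ h => simpa using h
  | external₁ => simp [mul_assoc]
  | external₂ => simp [mul_assoc]

section MixedAlg

variable {R : Type} [CommRing R] {k n : ℕ}

theorem coeff_trm_mul_mul_wrd (m σ : MMon k n) (c : R) (f : MixedAlg R k n)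
    (b : FreeMonoid (Fin n)) :
    (trm m c * f * wrd b).coeff (m * σ * (⟨0, b⟩ : MMon k n)) = c * f.coeff σ := by
  rw [trm, wrd, MonoidAlgebra.coeff_mul_single_mul, MonoidAlgebra.coeff_single_mul_mul, mul_one]

theorem exists_eq_of_mem_support_trm_mul_mul_wrd {m τ : MMon k n} {c : R} {f : MixedAlg R k n}
    {b : FreeMonoid (Fin n)} (hτ : τ ∈ (trm m c * f * wrd b).coeff.support) :
    ∃ σ ∈ f.coeff.support, m * σ * (⟨0, b⟩ : MMon k n) = τ := by
  classical
  obtain ⟨τ', hτ', rfl⟩ := Finset.mem_image.1 (MonoidAlgebra.support_coeff_mul_single_subset _ _ _ hτ)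
  obtain ⟨σ, hσ, rfl⟩ := Finset.mem_image.1 (MonoidAlgebra.support_coeff_single_mul_subset _ _ _ hτ')
  exact ⟨σ, hσ, rfl⟩

variable [LinearOrder (MMon k n)]

theorem LMd_eq_of_LMb_eq {f : MixedAlg R k n} {m : MMon k n} (h : LMb f = m) : LMd f = m :=
  congrArg (WithBot.unbotD 1) h

theorem LC_eq_of_LMb_eq {f : MixedAlg R k n} {m : MMon k n} (h : LMb f = m) :
    LC f = f.coeff m := by
  rw [LC, LMd_eq_of_LMb_eq h]

theorem le_LMd_of_mem_support {f : MixedAlg R k n} {σ : MMon k n} (hσ : σ ∈ f.coeff.support) :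
    σ ≤ LMd f := by
  obtain ⟨m, hm⟩ := Finset.max_of_mem hσ
  rw [LMd_eq_of_LMb_eq hm]
  exact Finset.le_max_of_eq hσ hm

theorem LC_ne_zero {f : MixedAlg R k n} (hf : f ≠ 0) : LC f ≠ 0 := by
  obtain ⟨m, hm⟩ := Finset.max_of_nonempty
    (Finsupp.support_nonempty_iff.2 fun h => hf (MonoidAlgebra.coeff_eq_zero.1 h))
  rw [LC_eq_of_LMb_eq hm]
  exact Finsupp.mem_support_iff.1 (Finset.mem_of_max hm)

theorem LMb_eq_of_forall_le {f : MixedAlg R k n} {m : MMon k n} (hm : f.coeff m ≠ 0)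
    (hle : ∀ τ ∈ f.coeff.support, τ ≤ m) : LMb f = m :=
  le_antisymm (Finset.max_le fun τ hτ => WithBot.coe_le_coe.2 (hle τ hτ))
    (Finset.le_max (Finsupp.mem_support_iff.2 hm))

theorem IsAmb.ambLM_eq {f g : MixedAlg R k n} {m₁ m₂ : MMon k n} {n₁ n₂ : FreeMonoid (Fin n)}
    (ha : IsAmb f g m₁ n₁ m₂ n₂) : ambLM f m₁ n₁ = m₂ * LMd g * ⟨0, n₂⟩ := by
  obtain ⟨a, b, c, d, hw, rfl, rfl, rfl, rfl⟩ := ha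
  refine MMon.ext ?_ (by simpa [ambLM] using hw.mul_eq)
  simp only [ambLM, MMon.mul_c, add_zero, tsub_add_cancel_of_le le_sup_left,
    tsub_add_cancel_of_le le_sup_right]

theorem IsAmb.coeff_GPolP_ambLM {f g : MixedAlg R k n} {m₁ m₂ : MMon k n}
    {n₁ n₂ : FreeMonoid (Fin n)} (ha : IsAmb f g m₁ n₁ m₂ n₂) (c d : R) :
    (GPolP c d f g m₁ n₁ m₂ n₂).coeff (ambLM f m₁ n₁) = c * LC f + d * LC g := by
  rw [GPolP, MonoidAlgebra.coeff_add, Finsupp.add_apply]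
  nth_rw 2 [ha.ambLM_eq]
  rw [ambLM, coeff_trm_mul_mul_wrd, coeff_trm_mul_mul_wrd, LC, LC]

variable {r : ℕ} [LinearOrder (ModMon k n r)]

theorem IsOrderSetting.le_of_mem_support_trm_mul_mul_wrd (hord : IsOrderSetting k n r)
    {m τ : MMon k n} {c : R} {f : MixedAlg R k n} {b : FreeMonoid (Fin n)}
    (hτ : τ ∈ (trm m c * f * wrd b).coeff.support) : τ ≤ m * LMd f * ⟨0, b⟩ := by
  obtain ⟨σ, hσ, rfl⟩ := exists_eq_of_mem_support_trm_mul_mul_wrd hτ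
  exact hord.mon_mul _ _ _ _ (le_LMd_of_mem_support hσ)

theorem IsOrderSetting.le_ambLM_of_mem_support_GPolP (hord : IsOrderSetting k n r)
    {f g : MixedAlg R k n} {m₁ m₂ : MMon k n} {n₁ n₂ : FreeMonoid (Fin n)}
    (ha : IsAmb f g m₁ n₁ m₂ n₂) {c d : R} {τ : MMon k n}
    (hτ : τ ∈ (GPolP c d f g m₁ n₁ m₂ n₂).coeff.support) : τ ≤ ambLM f m₁ n₁ := by
  classical
  rcases Finset.mem_union.1 (Finsupp.support_add hτ) with h | h
  · exact hord.le_of_mem_support_trm_mul_mul_wrd h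
  · rw [ha.ambLM_eq]
    exact hord.le_of_mem_support_trm_mul_mul_wrd h

end MixedAlg

theorem gpol_leading_term_general
    {R : Type} [CommRing R] [IsDomain R] [GCDMonoid R]
    {k n r : ℕ}
    [LinearOrder (MMon k n)] [LinearOrder (ModMon k n r)]
    (hord : IsOrderSetting k n r)
    (f g : MixedAlg R k n)
    (hf : f ≠ 0)
    (m₁ : MMon k n) (n₁ : FreeMonoid (Fin n)) (m₂ : MMon k n) (n₂ : FreeMonoid (Fin n))
    (ha : IsAmb f g m₁ n₁ m₂ n₂)
    (c d : R) (hcd : BezoutFor c d f g) :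
    LMb (GPolP c d f g m₁ n₁ m₂ n₂) = (ambLM f m₁ n₁ : WithBot (MMon k n)) ∧
    LC (GPolP c d f g m₁ n₁ m₂ n₂) = gcd (LC f) (LC g) ∧
    LTerm (GPolP c d f g m₁ n₁ m₂ n₂) = trm (ambLM f m₁ n₁) (gcd (LC f) (LC g)) := by
  have hcoeff : (GPolP c d f g m₁ n₁ m₂ n₂).coeff (ambLM f m₁ n₁) = gcd (LC f) (LC g) :=
    (ha.coeff_GPolP_ambLM c d).trans hcd
  have hLM : LMb (GPolP c d f g m₁ n₁ m₂ n₂) = ambLM f m₁ n₁ :=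
    LMb_eq_of_forall_le (hcoeff ▸ gcd_ne_zero_of_left (LC_ne_zero hf))
      fun _ => hord.le_ambLM_of_mem_support_GPolP ha
  have hLC : LC (GPolP c d f g m₁ n₁ m₂ n₂) = gcd (LC f) (LC g) :=
    (LC_eq_of_LMb_eq hLM).trans hcoeff
  exact ⟨hLM, hLC, by rw [LTerm, hLC, LMd_eq_of_LMb_eq hLM]⟩

/-- leading term of G-polynomials.  For any Bézout
coefficients `c, d` of `LC(f)`, `LC(g)`, the G-polynomial `G-Pol_{c,d}(a)` has
leading monomial `LM(a)` and leading coefficient `gcd(LC(f), LC(g))`; in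
particular its leading term `gcd(LC f, LC g)·LM(a)` does not depend on the
choice of `c, d`. -/
theorem gpol_leading_term
    {R : Type} [CommRing R] [IsDomain R] [IsPrincipalIdealRing R] [GCDMonoid R]
    {k n r : ℕ} [NeZero r]
    [LinearOrder (MMon k n)] [LinearOrder (ModMon k n r)]
    (hord : IsOrderSetting k n r)
    (F : Fin r → MixedAlg R k n)
    (f g : MixedAlg R k n) (α β : SigModule R k n r)
    (hlabf : barMap F α = f) (hlabg : barMap F β = g)
    (hf : f ≠ 0) (hg : g ≠ 0)
    (m₁ : MMon k n) (n₁ : FreeMonoid (Fin n)) (m₂ : MMon k n) (n₂ : FreeMonoid (Fin n))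
    (ha : IsAmb f g m₁ n₁ m₂ n₂)
    (c d : R) (hcd : BezoutFor c d f g) :
    LMb (GPolP c d f g m₁ n₁ m₂ n₂) = (ambLM f m₁ n₁ : WithBot (MMon k n)) ∧
    LC (GPolP c d f g m₁ n₁ m₂ n₂) = gcd (LC f) (LC g) ∧
    LTerm (GPolP c d f g m₁ n₁ m₂ n₂) = trm (ambLM f m₁ n₁) (gcd (LC f) (LC g)) :=
  gpol_leading_term_general hord f g hf m₁ n₁ m₂ n₂ ha c d hcd
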